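/- arXiv:math/0509648 — 3 statements merged into one kernel-verified Lean document; each statement's English description precedes it below -/
import Mathlib

section
/- Let p be a prime and let d be an integer with 0 ≤ d ≤ p−1. Then 2 · ∑_{k=0}^{p−1} k · C_{k+d} ≡ (d+1)·(1 − (p/3)) − 2·(p/3)·d − 2·∑_{k=0}^{d} k · C_{d−k} (mod p). -/
/-- `chi3 a` is the Legendre symbol `(a/3)`: the unique element of `{0, 1, -1}`
congruent to `a` modulo `3`. -/
def chi3 (a : ℤ) : ℤ := if a % 3 = 0 then 0 else if a % 3 = 1 then 1 else -1

/-!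
Modulo `p`, the telescoping identity `(n + 2) C_{n+1} - (n + 1) C_n = (3n + 1) C_n` expresses
`3 ∑_{k<p} k C_{k+d}` through the window sum `∑_{k<p} C_{k+d}` and Catalan numbers of index at
most `d + 1`. Lucas' theorem gives `2 C_{p+m} ≡ 4 C_m` for `m + 1 < p`, which reduces the window
sum to `∑_{k<p} C_k`, and `2 C_k = 4 binom(2k, k) - binom(2k + 2, k + 1)` reduces that to
`∑_{k<p} binom(2k, k)`. For odd `p`, `binom(2k, k) ≡ (-4)^k binom((p-1)/2, k)` for
`k ≤ (p-1)/2` and `p ∣ binom(2k, k)` for `p/2 < k < p`, so this sum is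
`(1 - 4)^((p-1)/2) ≡ (-3/p) = (p/3)` by Euler's criterion and quadratic reciprocity.
The primes `2` and `3` are checked directly.
-/

open Finset

theorem centralBinom_succ_eq_mul_catalan (m : ℕ) :
    (m + 1).centralBinom = (4 * m + 2) * catalan m := by
  apply Nat.eq_of_mul_eq_mul_left (by omega : 0 < m + 1)
  rw [Nat.succ_mul_centralBinom_succ, ← succ_mul_catalan_eq_centralBinom]
  ring

theorem succ_succ_mul_catalan_succ (m : ℕ) :
    (m + 2) * catalan (m + 1) = (4 * m + 2) * catalan m := by
  rw [succ_mul_catalan_eq_centralBinom, centralBinom_succ_eq_mul_catalan]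

theorem two_mul_catalan_add_centralBinom_succ (m : ℕ) :
    2 * catalan m + (m + 1).centralBinom = 4 * m.centralBinom := by
  rw [centralBinom_succ_eq_mul_catalan, ← succ_mul_catalan_eq_centralBinom]
  ring

section CommRing

variable {R : Type*} [CommRing R]

theorem two_mul_catalan_cast (m : ℕ) :
    2 * (catalan m : R) = 4 * m.centralBinom - (m + 1).centralBinom := by
  rw [eq_sub_iff_add_eq]
  exact_mod_cast congrArg (Nat.cast : ℕ → R) (two_mul_catalan_add_centralBinom_succ m)

theorem three_mul_sum_range_mul_catalan_add (d n : ℕ) :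
    3 * ∑ k ∈ range n, (k : R) * catalan (k + d)
        + (3 * d + 1) * ∑ k ∈ range n, (catalan (k + d) : R)
      = (n + d + 1) * catalan (n + d) - (d + 1) * catalan d := by
  induction n with
  | zero => simp
  | succ n ih =>
    have hrec := congrArg (Nat.cast : ℕ → R) (succ_succ_mul_catalan_succ (n + d))
    rw [sum_range_succ, sum_range_succ, Nat.add_right_comm n 1 d]
    push_cast at hrec ⊢
    linear_combination ih - hrec

theorem sum_range_succ_mul_catalan_sub (d : ℕ) :
    ∑ k ∈ range (d + 1), (k : R) * catalan (d - k)
      = d * ∑ k ∈ range (d + 1), (catalan k : R)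
        - ∑ k ∈ range (d + 1), (k : R) * catalan k := by
  rw [← sum_range_reflect, mul_sum, ← sum_sub_distrib]
  refine sum_congr rfl fun k hk => ?_
  have hk : k ≤ d := Nat.lt_succ_iff.mp (mem_range.mp hk)
  rw [Nat.add_sub_cancel, Nat.sub_sub_self hk, Nat.cast_sub hk]
  ring

end CommRing

theorem legendreSym_three (a : ℤ) : legendreSym 3 a = chi3 a := by
  have : Fact (Nat.Prime 3) := ⟨Nat.prime_three⟩
  rw [legendreSym.mod, chi3]
  obtain h | h | h : a % 3 = 0 ∨ a % 3 = 1 ∨ a % 3 = 2 := by omega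
  all_goals simp only [Nat.cast_ofNat, h]; decide

section ZModPrime

variable {p : ℕ} [Fact p.Prime]

theorem legendreSym_neg_three (hp2 : p ≠ 2) : legendreSym p (-3) = legendreSym 3 p := by
  have : Fact (Nat.Prime 3) := ⟨Nat.prime_three⟩
  have hodd := (Fact.out : p.Prime).eq_two_or_odd.resolve_left hp2
  have hrec : legendreSym p 3 = (-1) ^ (p / 2) * legendreSym 3 p := by
    simpa using legendreSym.quadratic_reciprocity' (p := 3) (q := p) (by decide) hp2
  rw [show (-3 : ℤ) = -1 * 3 by norm_num, legendreSym.mul, legendreSym.at_neg_one hp2,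
    ZMod.χ₄_eq_neg_one_pow hodd, hrec, ← mul_assoc, ← mul_pow]
  norm_num

theorem centralBinom_cast_eq_zero {k : ℕ} (h : p ≤ 2 * k) (hk : k < p) :
    (k.centralBinom : ZMod p) = 0 := by
  rw [ZMod.natCast_eq_zero_iff, Nat.centralBinom_eq_two_mul_choose, two_mul]
  exact (Fact.out : p.Prime).dvd_choose_add hk hk (by omega)

theorem centralBinom_prime_add_cast {m : ℕ} (hm : m < p) :
    ((p + m).centralBinom : ZMod p) = 2 * m.centralBinom := by
  have hp := (Fact.out : p.Prime).pos
  rw [Nat.centralBinom_eq_two_mul_choose, (ZMod.natCast_eq_natCast_iff _ _ _).mpr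
    Choose.choose_modEq_choose_mod_mul_choose_div_nat,
    show 2 * (p + m) = 2 * m + p * 2 by ring, show p + m = m + p * 1 by ring,
    Nat.add_mul_mod_self_left, Nat.add_mul_mod_self_left, Nat.add_mul_div_left _ _ hp,
    Nat.add_mul_div_left _ _ hp, Nat.mod_eq_of_lt hm, Nat.div_eq_of_lt hm]
  rcases lt_or_ge (2 * m) p with h | h
  · rw [Nat.mod_eq_of_lt h, Nat.div_eq_of_lt h, Nat.centralBinom_eq_two_mul_choose]
    push_cast [Nat.choose_one_right]
    ring
  · have h2m : 2 * m % p = 2 * m - p := by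
      rw [Nat.mod_eq_sub_mod h, Nat.mod_eq_of_lt (by omega)]
    rw [centralBinom_cast_eq_zero h hm, h2m, Nat.choose_eq_zero_of_lt (by omega : 2 * m - p < m)]
    simp

theorem two_mul_catalan_prime_add_cast {m : ℕ} (hm : m + 1 < p) :
    2 * (catalan (p + m) : ZMod p) = 4 * catalan m := by
  rw [two_mul_catalan_cast, add_assoc, centralBinom_prime_add_cast (by omega),
    centralBinom_prime_add_cast hm]
  linear_combination -2 * two_mul_catalan_cast (R := ZMod p) m

theorem centralBinom_cast_eq_neg_four_pow_mul_choose (hp2 : p ≠ 2) {k : ℕ} (hk : k ≤ p / 2) :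
    (k.centralBinom : ZMod p) = (-4) ^ k * (p / 2).choose k := by
  have hodd : 2 * (p / 2) + 1 = p := by
    have := (Fact.out : p.Prime).eq_two_or_odd.resolve_left hp2
    omega
  have hodd' : (2 * (p / 2 : ℕ) + 1 : ZMod p) = 0 := by
    exact_mod_cast (congrArg (Nat.cast : ℕ → ZMod p) hodd).trans (ZMod.natCast_self p)
  induction k with
  | zero => simp
  | succ k ih =>
    have hk1 : ((k + 1 : ℕ) : ZMod p) ≠ 0 := by
      rw [Ne, ZMod.natCast_eq_zero_iff]
      exact Nat.not_dvd_of_pos_of_lt (by omega) (by omega)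
    have hB := congrArg (Nat.cast : ℕ → ZMod p) (Nat.succ_mul_centralBinom_succ k)
    have hC := congrArg (Nat.cast : ℕ → ZMod p) (Nat.choose_succ_right_eq (p / 2) k)
    push_cast [Nat.cast_sub (by omega : k ≤ p / 2)] at hB hC hk1
    rw [ih (by omega)] at hB
    apply mul_left_cancel₀ hk1
    linear_combination
      hB - (-4) ^ (k + 1) * hC + 2 * (-4) ^ k * ((p / 2).choose k : ZMod p) * hodd'

theorem sum_range_centralBinom_cast_eq_neg_three_pow (hp2 : p ≠ 2) :
    ∑ k ∈ range p, (k.centralBinom : ZMod p) = (-3) ^ (p / 2) := by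
  have hodd := (Fact.out : p.Prime).eq_two_or_odd.resolve_left hp2
  rw [← sum_range_add_sum_Ico _ (by omega : p / 2 + 1 ≤ p),
    sum_eq_zero (s := Ico _ p) fun k hk =>
      centralBinom_cast_eq_zero (by grind) (mem_Ico.mp hk).2,
    add_zero, show (-3 : ZMod p) = -4 + 1 by norm_num, add_pow]
  refine sum_congr rfl fun k hk => ?_
  rw [centralBinom_cast_eq_neg_four_pow_mul_choose hp2 (by grind), one_pow, mul_one]

theorem sum_range_centralBinom_cast_eq_chi3 (hp2 : p ≠ 2) :
    ∑ k ∈ range p, (k.centralBinom : ZMod p) = chi3 p := by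
  rw [sum_range_centralBinom_cast_eq_neg_three_pow hp2, ← legendreSym_three,
    ← legendreSym_neg_three hp2, legendreSym.eq_pow]
  push_cast
  rfl

theorem two_mul_sum_range_catalan_cast (hp2 : p ≠ 2) :
    2 * ∑ k ∈ range p, (catalan k : ZMod p) = 3 * chi3 p - 1 := by
  have hBp : (p.centralBinom : ZMod p) = 2 := by
    simpa using centralBinom_prime_add_cast (p := p) (m := 0) (Fact.out : p.Prime).pos
  have hshift := sum_range_succ' (fun k => (k.centralBinom : ZMod p)) p
  rw [sum_range_succ, hBp, Nat.centralBinom_zero, Nat.cast_one] at hshift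
  rw [mul_sum, sum_congr rfl fun k _ => two_mul_catalan_cast k, sum_sub_distrib, ← mul_sum]
  linear_combination hshift + 3 * sum_range_centralBinom_cast_eq_chi3 hp2

theorem two_mul_sum_range_catalan_add_cast (hp2 : p ≠ 2) {d : ℕ} (hd : d < p) :
    2 * ∑ k ∈ range p, (catalan (k + d) : ZMod p)
      = 3 * chi3 p - 1 + 2 * ∑ m ∈ range d, (catalan m : ZMod p) := by
  have hsplit := sum_range_add (fun m => (catalan m : ZMod p))
  have hshift : 2 * ∑ m ∈ range d, (catalan (p + m) : ZMod p)
      = 4 * ∑ m ∈ range d, (catalan m : ZMod p) := by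
    rw [mul_sum, mul_sum]
    exact sum_congr rfl fun m hm => two_mul_catalan_prime_add_cast (by grind)
  have hdp := hsplit d p
  rw [Nat.add_comm d p] at hdp
  simp_rw [Nat.add_comm _ d]
  linear_combination -2 * hdp + 2 * hsplit p d + hshift + two_mul_sum_range_catalan_cast hp2

theorem two_mul_sum_range_mul_catalan_add_cast (hp2 : p ≠ 2) (hp3 : p ≠ 3) {d : ℕ}
    (hd : d < p) :
    2 * ∑ k ∈ range p, (k : ZMod p) * catalan (k + d)
      = (d + 1) * (1 - chi3 p) - 2 * chi3 p * d
        - 2 * ∑ k ∈ range (d + 1), (k : ZMod p) * catalan (d - k) := by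
  have hp0 : (p : ZMod p) = 0 := ZMod.natCast_self p
  have h3 : (3 : ZMod p) ≠ 0 := by
    rw [Ne, show (3 : ZMod p) = ((3 : ℕ) : ZMod p) by norm_num, ZMod.natCast_eq_zero_iff]
    exact fun h => hp3 ((Nat.prime_dvd_prime_iff_eq Fact.out Nat.prime_three).mp h)
  have hS := three_mul_sum_range_mul_catalan_add (R := ZMod p) d p
  have hW := three_mul_sum_range_mul_catalan_add (R := ZMod p) 0 (d + 1)
  simp only [add_zero, catalan_zero] at hW
  push_cast at hW
  have hrec := congrArg (Nat.cast : ℕ → ZMod p) (succ_succ_mul_catalan_succ d)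
  push_cast at hrec
  have hboundary : (d + 1 : ZMod p) * (2 * catalan (p + d)) = (d + 1) * (4 * catalan d) := by
    rcases Nat.lt_or_ge (d + 1) p with h | h
    · rw [two_mul_catalan_prime_add_cast h]
    · have : (d + 1 : ZMod p) = 0 := by
        exact_mod_cast (congrArg (Nat.cast : ℕ → ZMod p) (by omega : d + 1 = p)).trans hp0
      rw [this, zero_mul, zero_mul]
  apply mul_left_cancel₀ h3
  linear_combination 2 * hS + 2 * (catalan (p + d) : ZMod p) * hp0
    - (3 * d + 1) * two_mul_sum_range_catalan_add_cast hp2 hd + hboundary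
    + 6 * sum_range_succ_mul_catalan_sub (R := ZMod p) d
    + (6 * d + 2) * sum_range_succ (fun k => (catalan k : ZMod p)) d - 2 * hW - 2 * hrec

end ZModPrime

theorem sum_mul_catalan_shift (p : ℕ) (hp : p.Prime) (d : ℕ) (hd : d ≤ p - 1) :
    2 * ∑ k ∈ Finset.range p, (k : ℤ) * (catalan (k + d) : ℤ)
      ≡ ((d : ℤ) + 1) * (1 - chi3 (p : ℤ)) - 2 * chi3 (p : ℤ) * d
        - 2 * ∑ k ∈ Finset.range (d + 1), (k : ℤ) * (catalan (d - k) : ℤ) [ZMOD (p : ℤ)] := by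
  have : Fact p.Prime := ⟨hp⟩
  have htwo := hp.two_le
  obtain rfl | rfl | ⟨hp2, hp3⟩ : p = 2 ∨ p = 3 ∨ p ≠ 2 ∧ p ≠ 3 := by omega
  any_goals
    interval_cases d <;>
      simp [sum_range_succ, catalan_eq_centralBinom_div, Nat.centralBinom_eq_two_mul_choose,
        Nat.choose, chi3, Int.ModEq]
  rw [← ZMod.intCast_eq_intCast_iff]
  push_cast
  exact two_mul_sum_range_mul_catalan_add_cast hp2 hp3 (by omega)
end

section
/- Let p be a prime and let d be an integer with 0 ≤ d ≤ p−1. Then 6 · ∑_{k=0}^{p−1} k² · C_{k+d} ≡ (9d² + 6d − 1)·(p/3) − 3·(d+1)² − 6·[p=3] + 6·∑_{0 < k ≤ d} k² · C_{d−k} (mod p). -/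
open Finset

section BinomialSums

variable {R : Type*} [CommRing R]

theorem sum_range_natCast_mul_pow_mul_choose (y : R) (n : ℕ) :
    ∑ k ∈ range (n + 1), (k : R) * y ^ k * n.choose k = n * y * (y + 1) ^ (n - 1) := by
  cases n with
  | zero => simp
  | succ n =>
    rw [sum_range_succ', Nat.add_sub_cancel, add_pow, mul_sum]
    simp only [Nat.cast_zero, zero_mul, add_zero, one_pow, mul_one]
    refine sum_congr rfl fun k _ => ?_
    have h := congrArg (Nat.cast : ℕ → R) (Nat.add_one_mul_choose_eq n k)
    push_cast at h ⊢
    linear_combination (-y ^ (k + 1)) * h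

theorem mul_sum_range_pow_mul_choose_succ (y : R) (n : ℕ) :
    y * ∑ k ∈ range (n + 1), y ^ k * (n + 1).choose (k + 1) = (y + 1) ^ (n + 1) - 1 := by
  rw [add_pow, sum_range_succ' (fun m => y ^ m * 1 ^ (n + 1 - m) * ((n + 1).choose m : R)), mul_sum]
  simp only [one_pow, mul_one, pow_zero, Nat.choose_zero_right, Nat.cast_one, add_sub_cancel_right]
  exact sum_congr rfl fun k _ => by ring

end BinomialSums

theorem catalan_add_choose_succ (n : ℕ) :
    catalan n + (2 * n).choose (n + 1) = n.centralBinom := by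
  refine Nat.eq_of_mul_eq_mul_left n.succ_pos ?_
  have h := Nat.choose_succ_right_eq (2 * n) n
  rw [show 2 * n - n = n by omega] at h
  rw [mul_add, succ_mul_catalan_eq_centralBinom, Nat.centralBinom_eq_two_mul_choose]
  linarith

theorem natCast_mul_catalan {R : Type*} [CommRing R] (n : ℕ) :
    (n : R) * catalan n = n.centralBinom - catalan n := by
  have h := congrArg (Nat.cast : ℕ → R) (succ_mul_catalan_eq_centralBinom n)
  push_cast at h
  linear_combination h

theorem sum_Icc_sq_mul_catalan_sub {R : Type*} [CommRing R] (d : ℕ) :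
    ∑ k ∈ Icc 1 d, (k : R) ^ 2 * catalan (d - k)
      = ∑ j ∈ range d, ((j : R) - d) ^ 2 * catalan j := by
  refine sum_nbij' (d - ·) (d - ·) ?_ ?_ ?_ ?_ ?_ <;> intro k hk <;>
    simp only [mem_Icc, mem_range] at hk ⊢
  · omega
  · omega
  · omega
  · omega
  · rw [Nat.cast_sub hk.2]
    ring

theorem chi3_eq_jacobiSym_neg_three {b : ℕ} (hb : Odd b) : chi3 b = jacobiSym (-3) b := by
  rw [jacobiSym.mod_right _ hb]
  have hodd : b % 12 % 2 = 1 := by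
    rw [Nat.mod_mod_of_dvd _ (by norm_num)]
    exact Nat.odd_iff.mp hb
  have h3 : (b : ℤ) % 3 = ((b % 12 : ℕ) : ℤ) % 3 := by omega
  simp only [chi3, h3, show 4 * (-3 : ℤ).natAbs = 12 from rfl]
  have h12 : b % 12 < 12 := Nat.mod_lt _ (by norm_num)
  generalize b % 12 = r at *
  interval_cases r <;> first | omega | norm_num

namespace ZMod

variable {p : ℕ} [Fact p.Prime]

theorem natCast_chi3 (hp : p ≠ 2) : (chi3 p : ZMod p) = (-3) ^ (p / 2) := by
  rw [chi3_eq_jacobiSym_neg_three ((Fact.out : p.Prime).odd_of_ne_two hp),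
    ← jacobiSym.legendreSym.to_jacobiSym, legendreSym.eq_pow]
  push_cast
  rfl

theorem natCast_add_one_ne_zero {k : ℕ} (hk : k + 1 < p) : (k + 1 : ZMod p) ≠ 0 := by
  exact_mod_cast (natCast_eq_zero_iff _ _).not.mpr (Nat.not_dvd_of_pos_of_lt k.succ_pos hk)

theorem two_mul_natCast_half_add_one (hp : p ≠ 2) : 2 * ((p / 2 : ℕ) : ZMod p) + 1 = 0 := by
  have h := (Fact.out : p.Prime).eq_two_or_odd.resolve_left hp
  exact_mod_cast (congrArg (Nat.cast : ℕ → ZMod p) (show 2 * (p / 2) + 1 = p by omega)).trans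
    (natCast_self p)

theorem natCast_choose_eq_choose_mod_mul_choose_div (n k : ℕ) :
    (n.choose k : ZMod p) = (n % p).choose (k % p) * (n / p).choose (k / p) := by
  exact_mod_cast
    (natCast_eq_natCast_iff _ _ _).mpr Choose.choose_modEq_choose_mod_mul_choose_div_nat

theorem natCast_centralBinom_eq_zero {k : ℕ} (hk : p ≤ 2 * k) (hkp : k < p) :
    (k.centralBinom : ZMod p) = 0 := by
  rw [natCast_eq_zero_iff, Nat.centralBinom_eq_two_mul_choose, two_mul]
  exact (Fact.out : p.Prime).dvd_choose_add hkp hkp (by omega)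

theorem natCast_centralBinom_eq_neg_four_pow_mul_choose (hp : p ≠ 2) {k : ℕ} (hk : k ≤ p / 2) :
    (k.centralBinom : ZMod p) = (-4) ^ k * (p / 2).choose k := by
  induction k with
  | zero => simp
  | succ k ih =>
    refine mul_left_cancel₀ (natCast_add_one_ne_zero (p := p) (k := k) (by omega)) ?_
    have hcb := congrArg (Nat.cast : ℕ → ZMod p) (Nat.succ_mul_centralBinom_succ k)
    have hch := congrArg (Nat.cast : ℕ → ZMod p) (Nat.choose_succ_right_eq (p / 2) k)
    push_cast [Nat.cast_sub (show k ≤ p / 2 by omega)] at hcb hch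
    rw [hcb, ih (by omega)]
    linear_combination (-(-4) ^ (k + 1)) * hch
      + 2 * (-4) ^ k * (p / 2).choose k * two_mul_natCast_half_add_one hp

theorem sum_range_mul_centralBinom (hp : p ≠ 2) (f : ℕ → ZMod p) :
    ∑ k ∈ range p, f k * k.centralBinom
      = ∑ k ∈ range (p / 2 + 1), f k * (-4) ^ k * (p / 2).choose k := by
  have hhalf : p / 2 + 1 ≤ p := by
    have := (Fact.out : p.Prime).two_le
    omega
  rw [← sum_subset (range_subset_range.mpr hhalf) fun k hk hk' => by
    rw [natCast_centralBinom_eq_zero (by rw [mem_range, not_lt] at hk'; omega) (mem_range.mp hk),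
      mul_zero]]
  refine sum_congr rfl fun k hk => ?_
  rw [natCast_centralBinom_eq_neg_four_pow_mul_choose hp (Nat.lt_succ_iff.mp (mem_range.mp hk)),
    mul_assoc]

theorem sum_range_centralBinom (hp : p ≠ 2) :
    ∑ k ∈ range p, (k.centralBinom : ZMod p) = (-3) ^ (p / 2) := by
  have h := sum_range_mul_centralBinom hp 1
  simp only [Pi.one_apply, one_mul] at h
  rw [h, show (-3 : ZMod p) = -4 + 1 by norm_num, add_pow]
  simp

theorem three_mul_sum_range_mul_centralBinom (hp : p ≠ 2) :
    3 * ∑ k ∈ range p, (k : ZMod p) * k.centralBinom = -2 * (-3) ^ (p / 2) := by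
  have hp3 : 1 ≤ p / 2 := by
    have := (Fact.out : p.Prime).two_le
    omega
  rw [sum_range_mul_centralBinom hp, sum_range_natCast_mul_pow_mul_choose]
  have hsplit : (-3 : ZMod p) ^ (p / 2) = -3 * (-3) ^ (p / 2 - 1) := by
    rw [← pow_succ', Nat.sub_add_cancel hp3]
  rw [hsplit]
  linear_combination (-6 * (-3) ^ (p / 2 - 1)) * two_mul_natCast_half_add_one hp

theorem natCast_catalan_eq_zero {k : ℕ} (hk : p ≤ 2 * k) (hkp : k + 1 < p) :
    (catalan k : ZMod p) = 0 := by
  have h := congrArg (Nat.cast : ℕ → ZMod p) (succ_mul_catalan_eq_centralBinom k)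
  push_cast at h
  rw [natCast_centralBinom_eq_zero hk (by omega)] at h
  exact (mul_eq_zero.mp h).resolve_left (natCast_add_one_ne_zero hkp)

theorem natCast_catalan_pred : (catalan (p - 1) : ZMod p) = -1 := by
  have hp := (Fact.out : p.Prime).two_le
  have h := congrArg (Nat.cast : ℕ → ZMod p) (catalan_add_choose_succ (p - 1))
  have hn : 2 * (p - 1) = p - 2 + p * 1 := by omega
  push_cast at h
  rw [natCast_centralBinom_eq_zero (by omega) (by omega), Nat.sub_add_cancel (by omega),
    natCast_choose_eq_choose_mod_mul_choose_div, Nat.mod_self, Nat.div_self (by omega), hn,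
    Nat.add_mul_mod_self_left, Nat.add_mul_div_left _ _ (by omega), Nat.mod_eq_of_lt (by omega),
    Nat.div_eq_of_lt (by omega)] at h
  linear_combination (by simpa using h : (catalan (p - 1) : ZMod p) + 1 = 0)

theorem natCast_centralBinom_prime_add {r : ℕ} (hr : r < p) :
    ((p + r).centralBinom : ZMod p) = 2 * r.centralBinom := by
  have hp := (Fact.out : p.Prime).pos
  rw [Nat.centralBinom_eq_two_mul_choose, Nat.centralBinom_eq_two_mul_choose,
    natCast_choose_eq_choose_mod_mul_choose_div (2 * (p + r)),
    natCast_choose_eq_choose_mod_mul_choose_div (2 * r)]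
  rw [show 2 * (p + r) = 2 * r + p * 2 by ring, show p + r = r + p * 1 by ring,
    Nat.add_mul_mod_self_left, Nat.add_mul_mod_self_left, Nat.add_mul_div_left _ _ hp,
    Nat.add_mul_div_left _ _ hp, Nat.mod_eq_of_lt hr, Nat.div_eq_of_lt hr]
  rcases lt_or_ge (2 * r) p with h | h
  · simp only [Nat.div_eq_of_lt h, zero_add, Nat.choose_one_right, Nat.choose_zero_right]
    push_cast
    ring
  · rw [Nat.choose_eq_zero_of_lt (show 2 * r % p < r by
      rw [Nat.mod_eq_sub_mod h, Nat.mod_eq_of_lt (by omega)]; omega)]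
    simp

theorem natCast_catalan_prime_add {r : ℕ} (hr : r + 1 < p) :
    (catalan (p + r) : ZMod p) = 2 * catalan r := by
  refine mul_left_cancel₀ (natCast_add_one_ne_zero hr) ?_
  have h := congrArg (Nat.cast : ℕ → ZMod p) (succ_mul_catalan_eq_centralBinom (p + r))
  have h' := congrArg (Nat.cast : ℕ → ZMod p) (succ_mul_catalan_eq_centralBinom r)
  push_cast [natCast_self] at h h'
  rw [natCast_centralBinom_prime_add (by omega)] at h
  linear_combination h - 2 * h'

theorem natCast_half_add_one_mul_catalan (hp : p ≠ 2) {k : ℕ} (hk : k ≤ p / 2) :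
    (((p / 2 : ℕ) : ZMod p) + 1) * catalan k = (-4) ^ k * (p / 2 + 1).choose (k + 1) := by
  have := (Fact.out : p.Prime).two_le
  refine mul_left_cancel₀ (natCast_add_one_ne_zero (p := p) (k := k) (by omega)) ?_
  have hcat := congrArg (Nat.cast : ℕ → ZMod p) (succ_mul_catalan_eq_centralBinom k)
  have hch := congrArg (Nat.cast : ℕ → ZMod p) (Nat.add_one_mul_choose_eq (p / 2) k)
  push_cast at hcat hch
  rw [natCast_centralBinom_eq_neg_four_pow_mul_choose hp hk] at hcat
  linear_combination (((p / 2 : ℕ) : ZMod p) + 1) * hcat + (-4) ^ k * hch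

theorem two_mul_sum_range_catalan (hp : p ≠ 2) :
    2 * ∑ k ∈ range p, (catalan k : ZMod p) = 3 * (-3) ^ (p / 2) - 1 := by
  have hodd := (Fact.out : p.Prime).eq_two_or_odd.resolve_left hp
  have := (Fact.out : p.Prime).two_le
  have hsplit : ∑ k ∈ range p, (catalan k : ZMod p)
      = ∑ k ∈ range (p / 2 + 1), (catalan k : ZMod p) + catalan (p - 1) := by
    have h := sum_range_succ (fun k => (catalan k : ZMod p)) (p - 1)
    rw [Nat.sub_add_cancel (show 1 ≤ p by omega)] at h
    rw [h, ← sum_subset (range_subset_range.mpr (show p / 2 + 1 ≤ p - 1 by omega)) fun k hk hk' =>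
      natCast_catalan_eq_zero (by rw [mem_range, not_lt] at hk'; omega)
        (by rw [mem_range] at hk; omega)]
  have hhalf : (((p / 2 : ℕ) : ZMod p) + 1) * ∑ k ∈ range (p / 2 + 1), (catalan k : ZMod p)
      = ∑ k ∈ range (p / 2 + 1), (-4 : ZMod p) ^ k * (p / 2 + 1).choose (k + 1) := by
    rw [mul_sum]
    exact sum_congr rfl fun k hk =>
      natCast_half_add_one_mul_catalan hp (Nat.lt_succ_iff.mp (mem_range.mp hk))
  have hbin := mul_sum_range_pow_mul_choose_succ (-4 : ZMod p) (p / 2)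
  rw [← hhalf, show (-4 : ZMod p) + 1 = -3 by norm_num, pow_succ] at hbin
  rw [hsplit, natCast_catalan_pred]
  linear_combination -hbin - 2 * (∑ k ∈ range (p / 2 + 1), (catalan k : ZMod p)) *
    two_mul_natCast_half_add_one hp

theorem two_mul_sum_range_mul_catalan (hp : p ≠ 2) :
    2 * ∑ k ∈ range p, (k : ZMod p) * catalan k = 1 - (-3) ^ (p / 2) := by
  simp only [natCast_mul_catalan, sum_sub_distrib, sum_range_centralBinom hp]
  linear_combination -two_mul_sum_range_catalan hp

theorem six_mul_sum_range_sq_mul_catalan (hp : p ≠ 2) :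
    6 * ∑ k ∈ range p, (k : ZMod p) ^ 2 * catalan k = -(-3) ^ (p / 2) - 3 := by
  have h (k : ℕ) : (k : ZMod p) ^ 2 * catalan k = k * k.centralBinom - k * catalan k := by
    rw [← mul_sub, ← natCast_mul_catalan]
    ring
  simp only [h, sum_sub_distrib]
  linear_combination
    2 * three_mul_sum_range_mul_centralBinom hp - 3 * two_mul_sum_range_mul_catalan hp

theorem six_mul_sum_range_sub_sq_mul_catalan (hp : p ≠ 2) (c : ZMod p) :
    6 * ∑ k ∈ range p, ((k : ZMod p) - c) ^ 2 * catalan k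
      = (9 * c ^ 2 + 6 * c - 1) * (-3) ^ (p / 2) - 3 * (c + 1) ^ 2 := by
  have h : ∑ k ∈ range p, ((k : ZMod p) - c) ^ 2 * catalan k
      = ∑ k ∈ range p, (k : ZMod p) ^ 2 * catalan k
        - 2 * c * ∑ k ∈ range p, (k : ZMod p) * catalan k
        + c ^ 2 * ∑ k ∈ range p, (catalan k : ZMod p) := by
    simp only [mul_sum, ← sum_sub_distrib, ← sum_add_distrib]
    exact sum_congr rfl fun k _ => by ring
  rw [h]
  linear_combination six_mul_sum_range_sq_mul_catalan hp - 6 * c * two_mul_sum_range_mul_catalan hp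
    + 3 * c ^ 2 * two_mul_sum_range_catalan hp

theorem sum_range_mul_catalan_add (g : ZMod p → ZMod p) {d : ℕ} (hd : d < p) :
    ∑ k ∈ range p, g k * catalan (k + d)
      = ∑ j ∈ range p, g (j - d) * catalan j + ∑ j ∈ range d, g (j - d) * catalan j := by
  set h : ℕ → ZMod p := fun j => g (j - d) * catalan j
  have hshift : ∑ k ∈ range p, g k * catalan (k + d)
      = ∑ j ∈ range (d + p), h j - ∑ j ∈ range d, h j := by
    rw [sum_range_add, add_sub_cancel_left]
    refine sum_congr rfl fun k _ => ?_
    simp [h, add_comm]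
  have hwrap : ∀ r ∈ range d, h (p + r) = 2 * h r := fun r hr => by
    have hr : r + 1 < p := by
      rw [mem_range] at hr
      omega
    simp only [h, Nat.cast_add, natCast_self, zero_add, natCast_catalan_prime_add hr]
    ring
  rw [hshift, add_comm d p, sum_range_add, sum_congr rfl hwrap, ← mul_sum]
  ring

end ZMod

theorem sum_sq_mul_catalan_shift (p : ℕ) (hp : p.Prime) (d : ℕ) (hd : d ≤ p - 1) :
    6 * ∑ k ∈ Finset.range p, (k : ℤ) ^ 2 * (catalan (k + d) : ℤ)
      ≡ (9 * (d : ℤ) ^ 2 + 6 * d - 1) * chi3 (p : ℤ) - 3 * ((d : ℤ) + 1) ^ 2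
        - 6 * (if p = 3 then 1 else 0)
        + 6 * ∑ k ∈ Finset.Icc 1 d, (k : ℤ) ^ 2 * (catalan (d - k) : ℤ) [ZMOD (p : ℤ)] := by
  have := Fact.mk hp
  rcases eq_or_ne p 2 with rfl | hp2
  · interval_cases d <;> simp [sum_range_succ, catalan_two, chi3, Int.ModEq]
  rw [← ZMod.intCast_eq_intCast_iff]
  have hsix : ((6 * (if p = 3 then 1 else 0) : ℤ) : ZMod p) = 0 := by
    rw [ZMod.intCast_zmod_eq_zero_iff_dvd]
    split_ifs with h3
    · rw [h3]
      norm_num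
    · simp
  push_cast at hsix ⊢
  rw [ZMod.natCast_chi3 hp2, ZMod.sum_range_mul_catalan_add (· ^ 2) (Nat.lt_of_le_pred hp.pos hd),
    sum_Icc_sq_mul_catalan_sub]
  linear_combination hsix + ZMod.six_mul_sum_range_sub_sq_mul_catalan hp2 d
end

section
/- Let d be a natural number. Then ∑_{k=0}^{d} k · C_{d−k} = ∑_{j=1}^{d+1} ((j−1)/3) · (2·binom(2d, d−j) − (d+1)·C_{d,j}) − d, and also ∑_{k=0}^{d} k · C_{d−k} = ∑_{j=1}^{d+1} ((j+1)/3) · (2·binom(2d, d−j) − (d+1)·C_{d,j}) + 2d + 1. -/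
/-- `chooseN a b` is the binomial coefficient `binom(a, b)` with natural upper argument
and integer lower argument; it is `0` when `b < 0` or `b > a`. -/
def chooseN (a : ℕ) (b : ℤ) : ℤ := if 0 ≤ b then (a.choose b.toNat : ℤ) else 0

/-- The generalized Catalan-type numbers
`C_{n,j} = 2·binom(2n, n−j) − binom(2n, n−1−j) − binom(2n, n+1−j)`. -/
def catD (n j : ℕ) : ℤ :=
  2 * chooseN (2 * n) ((n : ℤ) - j) - chooseN (2 * n) ((n : ℤ) - 1 - j)
    - chooseN (2 * n) ((n : ℤ) + 1 - j)

/-!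
Multiplied by `d + 1`, the `j`-th summand on the right becomes `χ(j ∓ 1) j² binom(2n, n - j)`
with `n = d + 1`. For weights `g : ℤ → ℤ` put `W_n(g) = ∑_{j=1}^n g(j) binom(2n, n - j)`.
Applying Pascal's rule twice gives `W_{n+1}(g) = W_n(g(j-1) + 2g(j) + g(j+1))` up to two boundary
terms, which are multiples of `C_n` since `binom(2n, n) = (n+1) C_n` and `binom(2n, n-1) = n C_n`.
Because `χ(j-1) + χ(j) + χ(j+1) = 0`, this operator acts triangularly on the six weights
`χ(j - a) j^k` (`a ∈ {0, 1}`, `k ≤ 2`), so each `W_n(χ(j - a) j^k)` has a closed form in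
`P_n = ∑_{k<n} C_k` and `S_n = ∑_{k<n} (n-1-k) C_k`, proved by induction using
`(n+2) C_{n+1} = 2(2n+1) C_n`. The left-hand side is `S_{d+1}`.
-/

open Finset

lemma chi3_add_one (a : ℤ) : chi3 (a + 1) = -chi3 (a - 1) - chi3 a := by
  unfold chi3; split_ifs <;> omega

lemma chooseN_of_neg {a : ℕ} {b : ℤ} (hb : b < 0) : chooseN a b = 0 := if_neg hb.not_ge

lemma chooseN_natCast (a k : ℕ) : chooseN a k = a.choose k := by
  simp [chooseN]

lemma chooseN_succ (a : ℕ) (b : ℤ) : chooseN (a + 1) b = chooseN a b + chooseN a (b - 1) := by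
  rcases lt_trichotomy b 0 with hb | rfl | hb
  · simp [chooseN_of_neg hb, chooseN_of_neg (show b - 1 < 0 by omega)]
  · simp [chooseN]
  · obtain ⟨k, rfl⟩ : ∃ k : ℕ, b = k + 1 := ⟨(b - 1).toNat, by omega⟩
    rw [add_sub_cancel_right, ← Nat.cast_add_one, chooseN_natCast, chooseN_natCast,
      chooseN_natCast, Nat.choose_succ_succ', Nat.cast_add, add_comm]

lemma chooseN_add_two (a : ℕ) (b : ℤ) :
    chooseN (a + 2) b = chooseN a b + 2 * chooseN a (b - 1) + chooseN a (b - 2) := by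
  rw [chooseN_succ, chooseN_succ, chooseN_succ, sub_sub, one_add_one_eq_two]; ring

lemma succ_mul_chooseN_succ (a : ℕ) (b : ℤ) :
    (b + 1) * chooseN a (b + 1) = (a - b) * chooseN a b := by
  rcases lt_or_ge b 0 with hb | hb
  · rcases lt_or_eq_of_le (show b + 1 ≤ 0 by omega) with h | h
    · simp [chooseN_of_neg h, chooseN_of_neg hb]
    · simp [h, chooseN_of_neg hb]
  · lift b to ℕ using hb
    rw [← Nat.cast_add_one, chooseN_natCast, chooseN_natCast]
    rcases le_or_gt b a with hba | hba
    · have := Nat.choose_succ_right_eq a b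
      zify [hba] at this
      push_cast
      linear_combination this
    · simp [Nat.choose_eq_zero_of_lt hba, Nat.choose_eq_zero_of_lt (hba.trans b.lt_succ_self)]

lemma chooseN_two_mul_self (n : ℕ) : chooseN (2 * n) n = (n + 1) * catalan n := by
  rw [chooseN_natCast, ← Nat.centralBinom_eq_two_mul_choose, ← succ_mul_catalan_eq_centralBinom]
  push_cast; ring

lemma chooseN_two_mul_sub_one (n : ℕ) : chooseN (2 * n) (n - 1) = n * catalan n := by
  have h := succ_mul_chooseN_succ (2 * n) (n - 1)
  rw [sub_add_cancel, chooseN_two_mul_self] at h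
  refine mul_left_cancel₀ (show ((n : ℤ) + 1) ≠ 0 by positivity) ?_
  push_cast at h
  linear_combination -h

lemma sq_mul_chooseN_eq_succ_mul_sub_catD (d j : ℕ) :
    (j : ℤ) ^ 2 * chooseN (2 * (d + 1)) ((d + 1 : ℕ) - j)
      = ((d : ℤ) + 1) * (2 * chooseN (2 * d) ((d : ℤ) - j) - ((d : ℤ) + 1) * catD d j) := by
  rw [catD, show 2 * (d + 1) = 2 * d + 2 by ring, chooseN_add_two,
    show ((d + 1 : ℕ) : ℤ) - j - 1 = d - j by push_cast; ring,
    show ((d + 1 : ℕ) : ℤ) - j - 2 = d - j - 1 by push_cast; ring,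
    show ((d + 1 : ℕ) : ℤ) - j = d - j + 1 by push_cast; ring,
    show (d : ℤ) - 1 - j = d - j - 1 by ring, show (d : ℤ) + 1 - j = d - j + 1 by ring]
  have h₁ := succ_mul_chooseN_succ (2 * d) (d - j)
  have h₂ := succ_mul_chooseN_succ (2 * d) (d - j - 1)
  rw [sub_add_cancel] at h₂
  push_cast at h₁ h₂
  linear_combination (-(d + 1 + j) : ℤ) * h₁ + (d + 1 - j : ℤ) * h₂

def catalanSum (n : ℕ) : ℤ := ∑ k ∈ range n, (catalan k : ℤ)

def catalanWeightedSum (n : ℕ) : ℤ := ∑ k ∈ range n, ((n : ℤ) - 1 - k) * catalan k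

lemma catalanSum_succ (n : ℕ) : catalanSum (n + 1) = catalanSum n + catalan n :=
  sum_range_succ _ _

lemma catalanWeightedSum_succ (n : ℕ) :
    catalanWeightedSum (n + 1) = catalanWeightedSum n + catalanSum n := by
  simp only [catalanWeightedSum, catalanSum, sum_range_succ, Nat.cast_add_one, add_sub_cancel_right,
    sub_self, zero_mul, add_zero, ← sum_add_distrib]
  exact sum_congr rfl fun k _ => by ring

lemma sum_range_mul_catalan_sub_eq (d : ℕ) :
    ∑ k ∈ range (d + 1), (k : ℤ) * catalan (d - k) = catalanWeightedSum (d + 1) := by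
  rw [catalanWeightedSum, ← sum_range_reflect]
  refine sum_congr rfl fun k hk => ?_
  have hk : k ≤ d := Nat.lt_succ_iff.mp (mem_range.mp hk)
  rw [Nat.add_sub_cancel, Nat.sub_sub_self hk, Nat.cast_sub hk]
  push_cast; ring

lemma succ_mul_catalan_succ (n : ℕ) :
    ((n : ℤ) + 2) * catalan (n + 1) = 2 * (2 * n + 1) * catalan n := by
  have h := Nat.succ_mul_centralBinom_succ n
  rw [← succ_mul_catalan_eq_centralBinom, ← succ_mul_catalan_eq_centralBinom] at h
  refine mul_left_cancel₀ (show ((n : ℤ) + 1) ≠ 0 by positivity) ?_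
  zify at h
  linear_combination h

lemma succ_mul_catalan_eq (n : ℕ) :
    ((n : ℤ) + 1) * catalan n = (3 * n - 2) * catalanSum n - 3 * catalanWeightedSum n + 1 := by
  induction n with
  | zero => simp [catalanSum, catalanWeightedSum]
  | succ n ih =>
    rw [catalanSum_succ, catalanWeightedSum_succ]
    push_cast
    linear_combination succ_mul_catalan_succ n + ih

def weightedBinomSum (n : ℕ) : (ℤ → ℤ) →ₗ[ℤ] ℤ where
  toFun g := ∑ j ∈ Icc 1 n, g j * chooseN (2 * n) (n - j)
  map_add' f g := by simp only [Pi.add_apply, add_mul, sum_add_distrib]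
  map_smul' c g := by simp only [Pi.smul_apply, smul_eq_mul, mul_assoc, mul_sum, RingHom.id_apply]

lemma weightedBinomSum_eq_sum_range (n : ℕ) (g : ℤ → ℤ) :
    weightedBinomSum n g = ∑ i ∈ range n, g (i + 1) * chooseN (2 * n) (n - i - 1) := by
  rw [weightedBinomSum, LinearMap.coe_mk, AddHom.coe_mk, ← Ico_add_one_right_eq_Icc,
    sum_Ico_eq_sum_range, Nat.add_sub_cancel]
  exact sum_congr rfl fun i _ => by push_cast; ring_nf

def pascalStep (g : ℤ → ℤ) : ℤ → ℤ := fun j => g (j - 1) + 2 * g j + g (j + 1)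

lemma weightedBinomSum_succ (n : ℕ) (g : ℤ → ℤ) :
    weightedBinomSum (n + 1) g = weightedBinomSum n (pascalStep g)
      + g 1 * chooseN (2 * n) n - g 0 * chooseN (2 * n) (n - 1) := by
  have hshift (x : ℤ) : (n : ℤ) - (x + 1) - 1 = n - x - 2 := by ring
  have hcancel (x : ℤ) : (n : ℤ) + 1 - x - 1 = n - x := by ring
  rw [weightedBinomSum_eq_sum_range, weightedBinomSum_eq_sum_range,
    show 2 * (n + 1) = 2 * n + 2 by ring]
  simp only [Nat.cast_add_one, hcancel, add_sub_cancel_right, chooseN_add_two, pascalStep]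
  set b := chooseN (2 * n)
  have hb {c : ℤ} (hc : c < 0) : b c = 0 := chooseN_of_neg hc
  have hA : ∑ i ∈ range (n + 1), g (i + 1) * b (n - i)
      = g 1 * b n + ∑ i ∈ range n, g (i + 1 + 1) * b (n - i - 1) := by
    rw [sum_range_succ', add_comm]
    simp only [Nat.cast_add_one, Nat.cast_zero, zero_add, sub_zero, sub_add_eq_sub_sub]
  have hB : ∑ i ∈ range (n + 1), g (i + 1) * (2 * b (n - i - 1))
      = ∑ i ∈ range n, 2 * g (i + 1) * b (n - i - 1) := by
    rw [sum_range_succ, hb (by omega), mul_zero, mul_zero, add_zero]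
    exact sum_congr rfl fun i _ => by ring
  have hC : ∑ i ∈ range (n + 1), g (i + 1) * b (n - i - 2)
      = ∑ i ∈ range n, g i * b (n - i - 1) - g 0 * b (n - 1) := by
    have h := sum_range_succ' (fun i : ℕ => g i * b (n - i - 1)) (n + 1)
    rw [sum_range_succ, sum_range_succ, hb (by omega), hb (by omega)] at h
    simp only [Nat.cast_add_one, Nat.cast_zero, sub_zero, mul_zero, add_zero, hshift] at h
    linear_combination -h
  simp only [mul_add, add_mul, sum_add_distrib, hA, hB, hC]
  ring

def chiMoment (a : ℤ) (k : ℕ) (j : ℤ) : ℤ := chi3 (j - a) * j ^ k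

lemma pascalStep_chiMoment (a : ℤ) (k : ℕ) (j : ℤ) :
    pascalStep (chiMoment a k) j
      = chi3 (j - a - 1) * ((j - 1) ^ k - (j + 1) ^ k)
        + chi3 (j - a) * (2 * j ^ k - (j + 1) ^ k) := by
  simp only [pascalStep, chiMoment, sub_right_comm j 1 a, add_sub_right_comm j 1 a, chi3_add_one]
  ring

lemma chi3_sub_one_sub_one (j : ℤ) : chi3 (j - 1 - 1) = -chi3 (j - 1) - chi3 j := by
  have h := chi3_add_one (j - 1)
  rw [sub_add_cancel] at h
  linarith

lemma pascalStep_chiMoment_one_zero : pascalStep (chiMoment 1 0) = chiMoment 1 0 := by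
  funext j
  simp only [pascalStep_chiMoment, chiMoment, chi3_sub_one_sub_one]
  ring

lemma pascalStep_chiMoment_zero_zero : pascalStep (chiMoment 0 0) = chiMoment 0 0 := by
  funext j
  simp only [pascalStep_chiMoment, chiMoment, sub_zero]
  ring

lemma pascalStep_chiMoment_zero_one :
    pascalStep (chiMoment 0 1) = chiMoment 0 1 - 2 • chiMoment 1 0 - chiMoment 0 0 := by
  funext j
  simp only [pascalStep_chiMoment, chiMoment, sub_zero, Pi.sub_apply, Pi.smul_apply]
  ring

lemma pascalStep_chiMoment_one_one :
    pascalStep (chiMoment 1 1) = chiMoment 1 1 + chiMoment 1 0 + 2 • chiMoment 0 0 := by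
  funext j
  simp only [pascalStep_chiMoment, chiMoment, chi3_sub_one_sub_one, sub_zero, Pi.add_apply,
    Pi.smul_apply]
  ring

lemma pascalStep_chiMoment_one_two :
    pascalStep (chiMoment 1 2)
      = chiMoment 1 2 + 2 • chiMoment 1 1 - chiMoment 1 0 + 4 • chiMoment 0 1 := by
  funext j
  simp only [pascalStep_chiMoment, chiMoment, chi3_sub_one_sub_one, sub_zero, Pi.add_apply,
    Pi.sub_apply, Pi.smul_apply]
  ring

lemma pascalStep_chiMoment_zero_two :
    pascalStep (chiMoment 0 2)
      = chiMoment 0 2 - 4 • chiMoment 1 1 - 2 • chiMoment 0 1 - chiMoment 0 0 := by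
  funext j
  simp only [pascalStep_chiMoment, chiMoment, sub_zero, Pi.sub_apply, Pi.smul_apply]
  ring

section closedForms

variable (n : ℕ)

lemma weightedBinomSum_chiMoment_one_zero :
    weightedBinomSum n (chiMoment 1 0)
      = n * catalanSum n - catalanSum n - catalanWeightedSum n := by
  induction n with
  | zero => simp [weightedBinomSum_eq_sum_range, catalanSum, catalanWeightedSum]
  | succ n ih =>
    rw [weightedBinomSum_succ, pascalStep_chiMoment_one_zero, ih, chooseN_two_mul_self,
      chooseN_two_mul_sub_one, catalanSum_succ, catalanWeightedSum_succ]
    norm_num [chiMoment, chi3]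
    ring

lemma weightedBinomSum_chiMoment_zero_zero :
    weightedBinomSum n (chiMoment 0 0) = n * catalanSum n - catalanWeightedSum n := by
  induction n with
  | zero => simp [weightedBinomSum_eq_sum_range, catalanSum, catalanWeightedSum]
  | succ n ih =>
    rw [weightedBinomSum_succ, pascalStep_chiMoment_zero_zero, ih, chooseN_two_mul_self,
      chooseN_two_mul_sub_one, catalanSum_succ, catalanWeightedSum_succ]
    norm_num [chiMoment, chi3]
    ring

lemma weightedBinomSum_chiMoment_zero_one : weightedBinomSum n (chiMoment 0 1) = n := by
  induction n with
  | zero => simp [weightedBinomSum_eq_sum_range]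
  | succ n ih =>
    rw [weightedBinomSum_succ, pascalStep_chiMoment_zero_one, map_sub, map_sub, map_nsmul, ih,
      weightedBinomSum_chiMoment_one_zero, weightedBinomSum_chiMoment_zero_zero,
      chooseN_two_mul_self, chooseN_two_mul_sub_one]
    norm_num [chiMoment, chi3]
    linear_combination succ_mul_catalan_eq n

lemma weightedBinomSum_chiMoment_one_one :
    weightedBinomSum n (chiMoment 1 1) = n * catalanSum n - n := by
  induction n with
  | zero => simp [weightedBinomSum_eq_sum_range, catalanSum]
  | succ n ih =>
    rw [weightedBinomSum_succ, pascalStep_chiMoment_one_one, map_add, map_add, map_nsmul, ih,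
      weightedBinomSum_chiMoment_one_zero, weightedBinomSum_chiMoment_zero_zero,
      chooseN_two_mul_self, chooseN_two_mul_sub_one, catalanSum_succ]
    norm_num [chiMoment, chi3]
    linear_combination -succ_mul_catalan_eq n

lemma weightedBinomSum_chiMoment_one_two :
    weightedBinomSum n (chiMoment 1 2) = n * catalanWeightedSum n + n ^ 2 - n := by
  induction n with
  | zero => simp [weightedBinomSum_eq_sum_range, catalanWeightedSum]
  | succ n ih =>
    rw [weightedBinomSum_succ, pascalStep_chiMoment_one_two, map_add, map_sub, map_add, map_nsmul,
      map_nsmul, ih, weightedBinomSum_chiMoment_one_zero, weightedBinomSum_chiMoment_one_one,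
      weightedBinomSum_chiMoment_zero_one, chooseN_two_mul_self, chooseN_two_mul_sub_one,
      catalanWeightedSum_succ]
    norm_num [chiMoment, chi3]
    ring

lemma weightedBinomSum_chiMoment_zero_two :
    weightedBinomSum n (chiMoment 0 2) = n ^ 2 - 2 * n * catalanWeightedSum n := by
  induction n with
  | zero => simp [weightedBinomSum_eq_sum_range, catalanWeightedSum]
  | succ n ih =>
    rw [weightedBinomSum_succ, pascalStep_chiMoment_zero_two, map_sub, map_sub, map_sub, map_nsmul,
      map_nsmul, ih, weightedBinomSum_chiMoment_one_one, weightedBinomSum_chiMoment_zero_one,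
      weightedBinomSum_chiMoment_zero_zero, chooseN_two_mul_self, chooseN_two_mul_sub_one,
      catalanWeightedSum_succ]
    norm_num [chiMoment, chi3]
    linear_combination succ_mul_catalan_eq n

end closedForms

lemma weightedBinomSum_chiMoment_neg_one_two (n : ℕ) :
    weightedBinomSum n (chiMoment (-1) 2) = n * catalanWeightedSum n - 2 * n ^ 2 + n := by
  have h : chiMoment (-1) 2 = -chiMoment 1 2 - chiMoment 0 2 := by
    funext j
    simp only [chiMoment, sub_neg_eq_add, chi3_add_one, sub_zero, Pi.sub_apply, Pi.neg_apply]
    ring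
  rw [h, map_sub, map_neg, weightedBinomSum_chiMoment_one_two, weightedBinomSum_chiMoment_zero_two]
  ring

lemma succ_mul_sum_chi3_mul_eq_weightedBinomSum (d : ℕ) (a : ℤ) :
    ((d : ℤ) + 1) * ∑ j ∈ Icc 1 (d + 1),
        chi3 ((j : ℤ) - a) * (2 * chooseN (2 * d) ((d : ℤ) - j) - ((d : ℤ) + 1) * catD d j)
      = weightedBinomSum (d + 1) (chiMoment a 2) := by
  rw [mul_sum, weightedBinomSum, LinearMap.coe_mk, AddHom.coe_mk]
  refine sum_congr rfl fun j _ => ?_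
  rw [chiMoment, mul_assoc, sq_mul_chooseN_eq_succ_mul_sub_catD]
  ring

theorem catalan_convolution_recurrence (d : ℕ) :
    (∑ k ∈ Finset.range (d + 1), (k : ℤ) * (catalan (d - k) : ℤ)
        = ∑ j ∈ Finset.Icc 1 (d + 1),
            chi3 ((j : ℤ) - 1) * (2 * chooseN (2 * d) ((d : ℤ) - j) - ((d : ℤ) + 1) * catD d j)
          - d)
    ∧ ∑ k ∈ Finset.range (d + 1), (k : ℤ) * (catalan (d - k) : ℤ)
        = ∑ j ∈ Finset.Icc 1 (d + 1),
            chi3 ((j : ℤ) + 1) * (2 * chooseN (2 * d) ((d : ℤ) - j) - ((d : ℤ) + 1) * catD d j)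
          + 2 * d + 1 := by
  have h₁ := succ_mul_sum_chi3_mul_eq_weightedBinomSum d 1
  have h₂ := succ_mul_sum_chi3_mul_eq_weightedBinomSum d (-1)
  rw [weightedBinomSum_chiMoment_one_two] at h₁
  rw [weightedBinomSum_chiMoment_neg_one_two] at h₂
  simp only [sub_neg_eq_add] at h₂
  rw [sum_range_mul_catalan_sub_eq]
  have hd : (d : ℤ) + 1 ≠ 0 := by positivity
  push_cast at h₁ h₂
  constructor <;> refine mul_left_cancel₀ hd ?_
  · linear_combination -h₁
  · linear_combination -h₂
end
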